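/- arXiv:0811.2071 — 2 statements merged into one kernel-verified Lean document; each statement's English description precedes it below -/
import Mathlib

section
/- Fix 0 < λ₀ < 1 and for α with 2α·tanh β ≤ λ₀ set λ(α) = λ₀ − 2α·tanh β ≥ 0. Then the function α ↦ Ā_N(λ(α)) (the perturbed pressure evaluated along this line) satisfies d/dα [Ā_N(λ(α))] ≤ ln cosh β, and hence Ā_N(λ(α)) ≤ Ā_N(λ₀)|_{α=0} + α·ln cosh β. -/
open Filter Topology Finset

noncomputable section

/-- The value of an Ising spin encoded as a Boolean: `true ↦ +1`, `false ↦ -1`. -/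
def spin (b : Bool) : ℝ := if b then 1 else -1

/-- The Hamiltonian of the dilute ferromagnet on `N` sites, given the list of `k`
random edges `e`: `H = -∑_{ν} σ_{i_ν} σ_{j_ν}`. -/
def ham (N k : ℕ) (e : Fin k → Fin N × Fin N) (σ : Fin N → Bool) : ℝ :=
  -∑ ν : Fin k, spin (σ (e ν).1) * spin (σ (e ν).2)

/-- The partition function `Z_N(β)` for a given realization of the edges. -/
def partZ (N k : ℕ) (β : ℝ) (e : Fin k → Fin N × Fin N) : ℝ :=
  ∑ σ : Fin N → Bool, Real.exp (-β * ham N k e σ)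

/-- The Gibbs (Boltzmann) expectation `Ω(O)` for a given realization of the edges. -/
def gibbs (N k : ℕ) (β : ℝ) (e : Fin k → Fin N × Fin N) (O : (Fin N → Bool) → ℝ) : ℝ :=
  (∑ σ : Fin N → Bool, Real.exp (-β * ham N k e σ) * O σ) / partZ N k β e

/-- The Poisson probability weight `P(K = k) = e^{-ζ} ζ^k / k!`. -/
def poissonWeight (ζ : ℝ) (k : ℕ) : ℝ := Real.exp (-ζ) * ζ ^ k / (Nat.factorial k)

/-- The quenched expectation `𝔼`: average over the Poisson number `K` of edges
(of mean `α N`) and over the i.i.d. uniform random endpoints of the edges, of a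
disorder-dependent quantity `F`. -/
def quenchedExp (N : ℕ) (α : ℝ) (F : (k : ℕ) → (Fin k → Fin N × Fin N) → ℝ) : ℝ :=
  ∑' k : ℕ, poissonWeight (α * N) k *
    ((∑ e : Fin k → Fin N × Fin N, F k e) / (N : ℝ) ^ (2 * k))

/-- The magnetization `m(σ) = (1/N) ∑_i σ_i`. -/
def mag (N : ℕ) (σ : Fin N → Bool) : ℝ := (∑ i : Fin N, spin (σ i)) / N

/-- The quenched Gibbs average `⟨O⟩ = 𝔼 Ω(O)`. -/
def qGibbs (N : ℕ) (α β : ℝ) (O : (Fin N → Bool) → ℝ) : ℝ :=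
  quenchedExp N α (fun k e => gibbs N k β e O)

/-- The perturbed quenched pressure `Ā_N(λ) = (1/N) 𝔼 ln ∑_σ exp(-β H_N(σ) + λ N m(σ)²/2)`. -/
def pertPressure (N : ℕ) (α β lam : ℝ) : ℝ :=
  (quenchedExp N α (fun k e => Real.log (∑ σ : Fin N → Bool,
    Real.exp (-β * ham N k e σ + lam * N * (mag N σ) ^ 2 / 2)))) / N

/-!
Write the pressure as a Poisson mixture `Ā_N = N⁻¹ ∑ₖ P(K = k) 𝔼 ln Z_k(λ)`, where `Z_k` is the
perturbed partition function with `k` bonds. Along the line, the derivative in `α` has two parts: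
the Poisson weights contribute, after an index shift, `∑ₖ P(K = k) (𝔼 ln Z_{k+1} - 𝔼 ln Z_k)`,
and the moving `λ(α)` contributes `-tanh β ∑ₖ P(K = k) 𝔼 ⟨m²⟩_k`.
Adding a bond `(i, j)` multiplies each Boltzmann weight by
`e^{β σᵢσⱼ} = cosh β (1 + tanh β σᵢσⱼ)`, so `ln Z_{k+1} ≤ ln cosh β + ln Z_k + tanh β ⟨σᵢσⱼ⟩_k`
by `ln (1 + x) ≤ x`. Averaging over the uniform endpoints turns `⟨σᵢσⱼ⟩_k` into `⟨m²⟩_k`, which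
cancels the second part. So the derivative is at most `ln cosh β`, and the mean value inequality
on `[0, α]` gives the integrated bound.
-/

open Real
open scoped Nat BigOperators

namespace DiluteFerromagnet

lemma poissonWeight_nonneg {ζ : ℝ} (hζ : 0 ≤ ζ) (k : ℕ) : 0 ≤ poissonWeight ζ k := by
  unfold poissonWeight; positivity

lemma hasSum_poissonWeight (ζ : ℝ) : HasSum (poissonWeight ζ) 1 := by
  have h := (NormedSpace.expSeries_div_hasSum_exp ζ).mul_left (exp (-ζ))
  rw [← exp_eq_exp_ℝ, ← exp_add, neg_add_cancel, exp_zero] at h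
  show HasSum (fun k => exp (-ζ) * ζ ^ k / k !) 1
  simpa only [mul_div_assoc] using h

lemma abs_poissonWeight_le {ζ ρ : ℝ} (hζ : |ζ| ≤ ρ) (k : ℕ) :
    |poissonWeight ζ k| ≤ exp ρ * (ρ ^ k / k !) := by
  rw [poissonWeight, abs_div, abs_mul, abs_exp, abs_pow, Nat.abs_cast, mul_div_assoc]
  gcongr
  exact (neg_le_abs ζ).trans hζ

def poissonWeightDeriv (ζ : ℝ) (k : ℕ) : ℝ := exp (-ζ) * (k * ζ ^ (k - 1) - ζ ^ k) / k !

lemma hasDerivAt_poissonWeight (ζ : ℝ) (k : ℕ) :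
    HasDerivAt (poissonWeight · k) (poissonWeightDeriv ζ k) ζ := by
  have := (((hasDerivAt_neg ζ).exp).fun_mul (hasDerivAt_pow k ζ)).div_const (k ! : ℝ)
  exact this.congr_deriv (by rw [poissonWeightDeriv]; ring)

lemma abs_poissonWeightDeriv_le {ζ ρ : ℝ} (hζ : |ζ| ≤ ρ) (hρ : 1 ≤ ρ) (k : ℕ) :
    |poissonWeightDeriv ζ k| ≤ exp ρ * ((2 * ρ) ^ k / k !) := by
  have hpow : |ζ ^ (k - 1)| ≤ ρ ^ k :=
    abs_pow ζ _ ▸ (pow_le_pow_left₀ (abs_nonneg ζ) hζ _).trans (pow_le_pow_right₀ hρ (k.sub_le 1))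
  have hk : (k : ℝ) + 1 ≤ 2 ^ k := by exact_mod_cast Nat.lt_two_pow_self
  have hpoly : |k * ζ ^ (k - 1) - ζ ^ k| ≤ (2 * ρ) ^ k :=
    calc |k * ζ ^ (k - 1) - ζ ^ k| ≤ k * ρ ^ k + ρ ^ k := by
          refine (abs_sub _ _).trans (add_le_add ?_ ?_)
          · rw [abs_mul, Nat.abs_cast]; gcongr
          · rw [abs_pow]; gcongr
      _ = (k + 1) * ρ ^ k := by ring
      _ ≤ (2 * ρ) ^ k := by rw [mul_pow]; gcongr
  rw [poissonWeightDeriv, abs_div, abs_mul, abs_exp, Nat.abs_cast, mul_div_assoc]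
  gcongr
  exact (neg_le_abs ζ).trans hζ

lemma tsum_poissonWeightDeriv_mul {ζ : ℝ} {h : ℕ → ℝ}
    (hs : Summable fun k => poissonWeight ζ k * h k)
    (hs₁ : Summable fun k => poissonWeight ζ k * h (k + 1)) :
    ∑' k, poissonWeightDeriv ζ k * h k = ∑' k, poissonWeight ζ k * (h (k + 1) - h k) := by
  have hshift : ∀ k, exp (-ζ) * ((k + 1 : ℕ) * ζ ^ k) / (k + 1)! * h (k + 1)
      = poissonWeight ζ k * h (k + 1) := by
    intro k
    rw [poissonWeight, Nat.factorial_succ]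
    push_cast
    field_simp
  have hs' : Summable fun k : ℕ => exp (-ζ) * (k * ζ ^ (k - 1)) / k ! * h k := by
    rw [← summable_nat_add_iff 1]
    simpa only [Nat.add_sub_cancel, hshift] using hs₁
  calc ∑' k, poissonWeightDeriv ζ k * h k
      = ∑' k : ℕ, exp (-ζ) * (k * ζ ^ (k - 1)) / k ! * h k - ∑' k, poissonWeight ζ k * h k := by
        rw [← hs'.tsum_sub hs]
        congr 1 with k
        simp only [poissonWeightDeriv, poissonWeight]
        ring
    _ = ∑' k, poissonWeight ζ k * (h (k + 1) - h k) := by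
        rw [hs'.tsum_eq_zero_add]
        simp only [Nat.add_sub_cancel, hshift, CharP.cast_eq_zero, zero_mul, mul_zero,
          zero_div, zero_add]
        rw [← hs₁.tsum_sub hs]
        simp only [mul_sub]

lemma summable_mul_of_abs_le {f h : ℕ → ℝ} {A r M K : ℝ} (hf : ∀ k, |f k| ≤ A * (r ^ k / k !))
    (hh : ∀ k, |h k| ≤ M * K ^ k) : Summable fun k => f k * h k := by
  refine .of_norm_bounded ((Real.summable_pow_div_factorial (r * K)).mul_left (A * M)) fun k => ?_
  calc ‖f k * h k‖ = |f k| * |h k| := abs_mul _ _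
    _ ≤ A * (r ^ k / k !) * (M * K ^ k) :=
        mul_le_mul (hf k) (hh k) (abs_nonneg _) ((abs_nonneg _).trans (hf k))
    _ = A * M * ((r * K) ^ k / k !) := by ring

lemma tsum_mul_poissonWeightDeriv_add {ζ M K : ℝ} (c : ℝ) {h h' : ℕ → ℝ}
    (hh : ∀ k, |h k| ≤ M * K ^ k) (hh' : ∀ k, |h' k| ≤ M * K ^ k) :
    ∑' k, (c * poissonWeightDeriv ζ k * h k + poissonWeight ζ k * h' k)
      = ∑' k, poissonWeight ζ k * (c * (h (k + 1) - h k) + h' k) := by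
  have hζ : |ζ| ≤ |ζ| + 1 := le_add_of_nonneg_right zero_le_one
  have hp := abs_poissonWeight_le hζ
  have hph := summable_mul_of_abs_le hp hh
  have hph₁ : Summable fun k => poissonWeight ζ k * h (k + 1) :=
    summable_mul_of_abs_le (M := M * K) (K := K) hp fun k => (hh (k + 1)).trans_eq (by ring)
  have hph' := summable_mul_of_abs_le hp hh'
  have hpdh := summable_mul_of_abs_le (abs_poissonWeightDeriv_le hζ (by simp)) hh
  have hpΔh : Summable fun k => poissonWeight ζ k * (h (k + 1) - h k) := by
    simpa only [mul_sub] using hph₁.sub hph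
  calc ∑' k, (c * poissonWeightDeriv ζ k * h k + poissonWeight ζ k * h' k)
      = c * ∑' k, poissonWeightDeriv ζ k * h k + ∑' k, poissonWeight ζ k * h' k := by
        rw [← tsum_mul_left, ← (hpdh.mul_left c).tsum_add hph']
        simp only [mul_assoc]
    _ = c * ∑' k, poissonWeight ζ k * (h (k + 1) - h k) + ∑' k, poissonWeight ζ k * h' k := by
        rw [tsum_poissonWeightDeriv_mul hph hph₁]
    _ = _ := by
        rw [← tsum_mul_left, ← (hpΔh.mul_left c).tsum_add hph']
        congr 1 with k
        ring

theorem hasDerivAt_tsum_poissonWeight_mul {g g' : ℕ → ℝ → ℝ} {R M K a : ℝ} (c : ℝ)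
    (hg : ∀ k x, |x| < R → HasDerivAt (g k) (g' k x) x)
    (hg_le : ∀ k x, |x| < R → |g k x| ≤ M * K ^ k)
    (hg'_le : ∀ k x, |x| < R → |g' k x| ≤ M * K ^ k) (ha : |a| < R) :
    HasDerivAt (fun x => ∑' k, poissonWeight (x * c) k * g k x)
      (∑' k, poissonWeight (a * c) k * (c * (g (k + 1) a - g k a) + g' k a)) a := by
  have hball : ∀ x, x ∈ Metric.ball (0 : ℝ) R ↔ |x| < R := fun x => by
    rw [mem_ball_zero_iff, Real.norm_eq_abs]
  obtain ⟨ρ, hρ, hζ⟩ : ∃ ρ, 1 ≤ ρ ∧ ∀ x, |x| < R → |x * c| ≤ ρ := by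
    refine ⟨R * |c| + 1, ?_, fun x hx => ?_⟩
    · nlinarith [abs_nonneg c, (abs_nonneg a).trans ha.le]
    · rw [abs_mul]; nlinarith [abs_nonneg c, abs_nonneg x]
  have hterm : ∀ k x, |x| < R → HasDerivAt (fun x => poissonWeight (x * c) k * g k x)
      (c * poissonWeightDeriv (x * c) k * g k x + poissonWeight (x * c) k * g' k x) x := by
    intro k x hx
    have hp : HasDerivAt (fun x => poissonWeight (x * c) k)
        (poissonWeightDeriv (x * c) k * c) x := by
      have := (hasDerivAt_poissonWeight (x * c) k).comp x ((hasDerivAt_id' x).mul_const c)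
      rwa [one_mul] at this
    exact (hp.fun_mul (hg k x hx)).congr_deriv (by ring)
  have hbound : ∀ k x, x ∈ Metric.ball (0 : ℝ) R →
      ‖c * poissonWeightDeriv (x * c) k * g k x + poissonWeight (x * c) k * g' k x‖
        ≤ (|c| + 1) * exp ρ * M * ((2 * ρ * K) ^ k / k !) := by
    intro k x hx
    rw [hball] at hx
    calc _ ≤ |c| * |poissonWeightDeriv (x * c) k| * |g k x|
          + |poissonWeight (x * c) k| * |g' k x| := by
          rw [Real.norm_eq_abs, ← abs_mul, ← abs_mul, ← abs_mul]; exact abs_add_le _ _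
      _ ≤ |c| * (exp ρ * ((2 * ρ) ^ k / k !)) * (M * K ^ k)
          + exp ρ * ((2 * ρ) ^ k / k !) * (M * K ^ k) := by
          gcongr
          exacts [abs_poissonWeightDeriv_le (hζ x hx) hρ k, hg_le k x hx,
            (abs_poissonWeight_le (hζ x hx) k).trans (by gcongr; linarith), hg'_le k x hx]
      _ = (|c| + 1) * exp ρ * M * ((2 * ρ * K) ^ k / k !) := by rw [mul_pow (2 * ρ) K]; ring
  refine (hasDerivAt_tsum_of_isPreconnected
    ((Real.summable_pow_div_factorial (2 * ρ * K)).mul_left ((|c| + 1) * exp ρ * M))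
    Metric.isOpen_ball (convex_ball 0 R).isPreconnected (fun k x hx => hterm k x ((hball x).1 hx))
    hbound ((hball a).2 ha) ?_ ((hball a).2 ha)).congr_deriv
    (tsum_mul_poissonWeightDeriv_add c (hg_le · a ha) (hg'_le · a ha))
  exact summable_mul_of_abs_le (abs_poissonWeight_le (hζ a ha)) (hg_le · a ha)

lemma tsum_poissonWeight_mul_le {ζ L : ℝ} {d : ℕ → ℝ} (hζ : 0 ≤ ζ) (hL : 0 ≤ L)
    (hd : ∀ k, d k ≤ L) : ∑' k, poissonWeight ζ k * d k ≤ L := by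
  refine tsum_le_of_sum_le' hL fun s => ?_
  calc ∑ k ∈ s, poissonWeight ζ k * d k ≤ (∑ k ∈ s, poissonWeight ζ k) * L := by
        rw [sum_mul]; gcongr with k; exacts [poissonWeight_nonneg hζ k, hd k]
    _ ≤ 1 * L := by
        gcongr
        exact (hasSum_poissonWeight ζ).tsum_eq ▸
          (hasSum_poissonWeight ζ).summable.sum_le_tsum s fun k _ => poissonWeight_nonneg hζ k
    _ = L := one_mul L

section WeightedAverage

variable {ι : Type*} [Fintype ι]

lemma abs_sum_mul_div_sum_le_one {w O : ι → ℝ} (hw : ∀ i, 0 ≤ w i) (hO : ∀ i, |O i| ≤ 1) :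
    |(∑ i, w i * O i) / ∑ i, w i| ≤ 1 := by
  rw [abs_div, abs_of_nonneg (sum_nonneg fun i _ => hw i)]
  refine div_le_one_of_le₀ ((abs_sum_le_sum_abs _ _).trans (sum_le_sum fun i _ => ?_))
    (sum_nonneg fun i _ => hw i)
  rw [abs_mul, abs_of_nonneg (hw i)]
  exact mul_le_of_le_one_right (hw i) (hO i)

lemma abs_log_sum_exp_le [Nonempty ι] {f : ι → ℝ} {B : ℝ} (hf : ∀ i, |f i| ≤ B) :
    |log (∑ i, exp (f i))| ≤ log (Fintype.card ι) + B := by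
  obtain ⟨i₀⟩ := ‹Nonempty ι›
  have hcard : (1 : ℝ) ≤ Fintype.card ι := by exact_mod_cast Fintype.card_pos
  have hpos : 0 < ∑ i, exp (f i) := sum_pos (fun i _ => exp_pos _) univ_nonempty
  have hlower : exp (-B) ≤ ∑ i, exp (f i) :=
    (exp_le_exp.2 (neg_le.1 ((neg_le_abs _).trans (hf i₀)))).trans
      (single_le_sum (fun i _ => (exp_pos (f i)).le) (mem_univ i₀))
  have hupper : ∑ i, exp (f i) ≤ Fintype.card ι * exp B := by
    simpa using sum_le_sum fun i (_ : i ∈ univ) => exp_le_exp.2 ((le_abs_self _).trans (hf i))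
  rw [abs_le]
  constructor
  · have := log_le_log (exp_pos _) hlower
    rw [log_exp] at this
    linarith [log_nonneg hcard]
  · have := log_le_log hpos hupper
    rwa [log_mul (by positivity) (exp_pos B).ne', log_exp] at this

lemma exp_mul_eq_cosh_mul {s : ℝ} (hs : s = 1 ∨ s = -1) (β : ℝ) :
    exp (β * s) = cosh β * (1 + tanh β * s) := by
  rw [tanh_eq_sinh_div_cosh, mul_add, mul_one, ← mul_assoc, mul_div_cancel₀ _ (cosh_pos β).ne']
  rcases hs with rfl | rfl
  · rw [mul_one, mul_one, cosh_add_sinh]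
  · rw [mul_neg_one, mul_neg_one, ← sub_eq_add_neg, cosh_sub_sinh]

lemma log_sum_mul_exp_le [Nonempty ι] {w s : ι → ℝ} (hw : ∀ i, 0 < w i)
    (hs : ∀ i, s i = 1 ∨ s i = -1) (β : ℝ) :
    log (∑ i, w i * exp (β * s i))
      ≤ log (cosh β) + log (∑ i, w i) + tanh β * ((∑ i, w i * s i) / ∑ i, w i) := by
  set W := ∑ i, w i
  set A := (∑ i, w i * s i) / W
  have hW : 0 < W := sum_pos (fun i _ => hw i) univ_nonempty
  have hA : |A| ≤ 1 := abs_sum_mul_div_sum_le_one (fun i => (hw i).le) fun i => by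
    rcases hs i with h | h <;> simp [h]
  have hpos : 0 < 1 + tanh β * A := by
    have : |tanh β * A| < 1 := by
      rw [abs_mul]; nlinarith [abs_tanh_lt_one β, abs_nonneg (tanh β), abs_nonneg A]
    linarith [neg_abs_le (tanh β * A)]
  have hsum : ∑ i, w i * exp (β * s i) = cosh β * W * (1 + tanh β * A) :=
    calc ∑ i, w i * exp (β * s i)
        = ∑ i, (cosh β * w i + cosh β * tanh β * (w i * s i)) := by
          congr 1 with i; rw [exp_mul_eq_cosh_mul (hs i)]; ring
      _ = cosh β * W + cosh β * tanh β * ∑ i, w i * s i := by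
          rw [sum_add_distrib, ← mul_sum, ← mul_sum]
      _ = cosh β * W * (1 + tanh β * A) := by
          simp only [A]; field_simp
  rw [hsum, log_mul (by positivity) hpos.ne', log_mul (cosh_pos β).ne' hW.ne']
  linarith [log_le_sub_one_of_pos hpos]

end WeightedAverage

lemma spin_mul_spin_eq_one_or (a b : Bool) : spin a * spin b = 1 ∨ spin a * spin b = -1 := by
  cases a <;> cases b <;> norm_num [spin]

lemma abs_spin (b : Bool) : |spin b| = 1 := by cases b <;> simp [spin]

lemma ham_cons {N k : ℕ} (p : Fin N × Fin N) (e : Fin k → Fin N × Fin N) (σ : Fin N → Bool) :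
    ham N (k + 1) (Fin.cons p e) σ = -(spin (σ p.1) * spin (σ p.2)) + ham N k e σ := by
  simp only [ham, Fin.sum_univ_succ, Fin.cons_zero, Fin.cons_succ]
  ring

lemma abs_ham_le {N k : ℕ} (e : Fin k → Fin N × Fin N) (σ : Fin N → Bool) :
    |ham N k e σ| ≤ k := by
  rw [ham, abs_neg]
  refine (abs_sum_le_sum_abs _ _).trans ?_
  simp [abs_mul, abs_spin]

lemma mag_eq_expect (N : ℕ) (σ : Fin N → Bool) : mag N σ = 𝔼 i, spin (σ i) := by
  rw [mag, Fintype.expect_eq_sum_div_card, Fintype.card_fin]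

lemma mag_sq_le_one (N : ℕ) (σ : Fin N → Bool) : mag N σ ^ 2 ≤ 1 := by
  rw [sq_le_one_iff_abs_le_one, mag, abs_div, Nat.abs_cast]
  refine div_le_one_of_le₀ ((abs_sum_le_sum_abs _ _).trans ?_) N.cast_nonneg
  simp [abs_spin]

lemma expect_spin_mul_spin (N : ℕ) (σ : Fin N → Bool) :
    𝔼 p : Fin N × Fin N, spin (σ p.1) * spin (σ p.2) = mag N σ ^ 2 := by
  rw [sq, mag_eq_expect, Fintype.expect_mul_expect,
    ← expect_product' univ univ fun i j => spin (σ i) * spin (σ j), univ_product_univ]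

lemma expect_fin_succ_pi {X : Type*} [Fintype X] {k : ℕ} (F : (Fin (k + 1) → X) → ℝ) :
    𝔼 e', F e' = 𝔼 p, 𝔼 e, F (Fin.cons p e) := by
  rw [← Fintype.expect_equiv (Fin.consEquiv fun _ => X) (fun q => F (Fin.cons q.1 q.2)) F
    fun _ => rfl, ← expect_product' univ univ fun p e => F (Fin.cons p e), univ_product_univ]

def pertWeight (N k : ℕ) (β lam : ℝ) (e : Fin k → Fin N × Fin N) (σ : Fin N → Bool) : ℝ :=
  exp (-β * ham N k e σ + lam * N * mag N σ ^ 2 / 2)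

def pertZ (N k : ℕ) (β lam : ℝ) (e : Fin k → Fin N × Fin N) : ℝ :=
  ∑ σ, pertWeight N k β lam e σ

def pertGibbs (N k : ℕ) (β lam : ℝ) (e : Fin k → Fin N × Fin N)
    (O : (Fin N → Bool) → ℝ) : ℝ :=
  (∑ σ, pertWeight N k β lam e σ * O σ) / pertZ N k β lam e

def quenchedLogZ (N k : ℕ) (β lam : ℝ) : ℝ :=
  𝔼 e : Fin k → Fin N × Fin N, log (pertZ N k β lam e)

def quenchedMagSq (N k : ℕ) (β lam : ℝ) : ℝ :=
  𝔼 e : Fin k → Fin N × Fin N, pertGibbs N k β lam e (mag N · ^ 2)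

section Perturbed

variable {N : ℕ} {β lam : ℝ}

lemma pertZ_pos {k : ℕ} (e : Fin k → Fin N × Fin N) : 0 < pertZ N k β lam e :=
  sum_pos (fun _ _ => exp_pos _) univ_nonempty

lemma pertWeight_cons {k : ℕ} (p : Fin N × Fin N) (e : Fin k → Fin N × Fin N) (σ : Fin N → Bool) :
    pertWeight N (k + 1) β lam (Fin.cons p e) σ
      = pertWeight N k β lam e σ * exp (β * (spin (σ p.1) * spin (σ p.2))) := by
  rw [pertWeight, pertWeight, ← exp_add, ham_cons]
  ring_nf

lemma log_pertZ_cons_le {k : ℕ} (p : Fin N × Fin N) (e : Fin k → Fin N × Fin N) :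
    log (pertZ N (k + 1) β lam (Fin.cons p e))
      ≤ log (cosh β) + log (pertZ N k β lam e)
        + tanh β * pertGibbs N k β lam e (fun σ => spin (σ p.1) * spin (σ p.2)) := by
  simp only [pertZ, pertGibbs, pertWeight_cons]
  exact log_sum_mul_exp_le (fun σ => exp_pos _) (fun σ => spin_mul_spin_eq_one_or _ _) β

lemma expect_pertGibbs {k : ℕ} {κ : Type*} [Fintype κ] (e : Fin k → Fin N × Fin N)
    (O : κ → (Fin N → Bool) → ℝ) :
    𝔼 j, pertGibbs N k β lam e (O j) = pertGibbs N k β lam e (fun σ => 𝔼 j, O j σ) := by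
  simp only [pertGibbs, ← expect_div, mul_expect]
  rw [expect_sum_comm]

lemma abs_pertGibbs_le_one {k : ℕ} (e : Fin k → Fin N × Fin N) {O : (Fin N → Bool) → ℝ}
    (hO : ∀ σ, |O σ| ≤ 1) : |pertGibbs N k β lam e O| ≤ 1 :=
  abs_sum_mul_div_sum_le_one (fun _ => (exp_pos _).le) hO

lemma abs_log_pertZ_le {k : ℕ} (e : Fin k → Fin N × Fin N) :
    |log (pertZ N k β lam e)| ≤ N * log 2 + (|β| * k + |lam| * N / 2) := by
  have hcard : log (Fintype.card (Fin N → Bool)) = N * log 2 := by simp [Real.log_pow]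
  refine hcard ▸ abs_log_sum_exp_le fun σ => (abs_add_le _ _).trans (add_le_add ?_ ?_)
  · rw [abs_mul, abs_neg]; gcongr; exact abs_ham_le e σ
  · rw [abs_div, abs_mul, abs_mul, Nat.abs_cast, abs_two, abs_of_nonneg (sq_nonneg (mag N σ))]
    exact div_le_div_of_nonneg_right (mul_le_of_le_one_right (by positivity) (mag_sq_le_one N σ))
      zero_le_two

lemma quenchedLogZ_succ_le (hN : 0 < N) (k : ℕ) :
    quenchedLogZ N (k + 1) β lam
      ≤ log (cosh β) + quenchedLogZ N k β lam + tanh β * quenchedMagSq N k β lam := by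
  have : Nonempty (Fin N) := ⟨⟨0, hN⟩⟩
  calc quenchedLogZ N (k + 1) β lam
      = 𝔼 p, 𝔼 e, log (pertZ N (k + 1) β lam (Fin.cons p e)) := expect_fin_succ_pi _
    _ ≤ 𝔼 p : Fin N × Fin N, 𝔼 e, (log (cosh β) + log (pertZ N k β lam e)
          + tanh β * pertGibbs N k β lam e (fun σ => spin (σ p.1) * spin (σ p.2))) :=
        expect_le_expect fun p _ => expect_le_expect fun e _ => log_pertZ_cons_le p e
    _ = _ := by
        rw [expect_comm]
        simp only [expect_add_distrib, Fintype.expect_const, ← mul_expect, expect_pertGibbs,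
          expect_spin_mul_spin]
        rfl

lemma abs_quenchedLogZ_le (hN : 0 < N) (k : ℕ) :
    |quenchedLogZ N k β lam| ≤ N * log 2 + (|β| * k + |lam| * N / 2) :=
  have : Nonempty (Fin N) := ⟨⟨0, hN⟩⟩
  (abs_expect_le _ _).trans (expect_le univ_nonempty fun e _ => abs_log_pertZ_le e)

lemma abs_quenchedMagSq_le_one (hN : 0 < N) (k : ℕ) : |quenchedMagSq N k β lam| ≤ 1 :=
  have : Nonempty (Fin N) := ⟨⟨0, hN⟩⟩
  (abs_expect_le _ _).trans <| expect_le univ_nonempty fun e _ => abs_pertGibbs_le_one e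
    fun σ => (abs_of_nonneg (sq_nonneg _)).trans_le (mag_sq_le_one N σ)

lemma hasDerivAt_log_pertZ {k : ℕ} (e : Fin k → Fin N × Fin N) :
    HasDerivAt (fun l => log (pertZ N k β l e))
      (N / 2 * pertGibbs N k β lam e (mag N · ^ 2)) lam := by
  have hZ : HasDerivAt (fun l => pertZ N k β l e)
      (∑ σ, pertWeight N k β lam e σ * (1 * N * mag N σ ^ 2 / 2)) lam :=
    HasDerivAt.fun_sum fun σ _ =>
      (((((hasDerivAt_id' lam).mul_const (N : ℝ)).mul_const (mag N σ ^ 2)).div_const 2).const_add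
        (-β * ham N k e σ)).exp
  refine (hZ.log (pertZ_pos e).ne').congr_deriv ?_
  rw [pertGibbs, mul_div_assoc', mul_sum]
  congr 1
  refine sum_congr rfl fun σ _ => ?_
  ring

lemma hasDerivAt_quenchedLogZ (k : ℕ) :
    HasDerivAt (quenchedLogZ N k β ·) (N / 2 * quenchedMagSq N k β lam) lam := by
  simp only [quenchedLogZ, quenchedMagSq, Fintype.expect_eq_sum_div_card]
  refine ((HasDerivAt.fun_sum fun e _ => hasDerivAt_log_pertZ e).div_const _).congr_deriv ?_
  rw [← mul_sum, mul_div_assoc]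

end Perturbed

lemma add_mul_le_mul_two_pow {C D : ℝ} (hC : 0 ≤ C) (hD : 0 ≤ D) (k : ℕ) :
    C + D * k ≤ (C + D) * 2 ^ k := by
  have hk : (k : ℝ) ≤ 2 ^ k := by exact_mod_cast Nat.lt_two_pow_self.le
  have h1 : (1 : ℝ) ≤ 2 ^ k := one_le_pow₀ one_le_two
  nlinarith

lemma pertPressure_eq_tsum (N : ℕ) (α β lam : ℝ) :
    pertPressure N α β lam = (∑' k, poissonWeight (α * N) k * quenchedLogZ N k β lam) / N := by
  unfold pertPressure quenchedExp
  congr 2 with k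
  rw [quenchedLogZ, Fintype.expect_eq_sum_div_card]
  simp [pertZ, pertWeight, pow_mul, sq]

section Line

variable {N : ℕ} {β lam₀ : ℝ}

lemma hasDerivAt_pertPressure_line (hN : 0 < N) (a : ℝ) :
    HasDerivAt (fun a => pertPressure N a β (lam₀ - 2 * a * tanh β))
      ((∑' k, poissonWeight (a * N) k *
        (N * (quenchedLogZ N (k + 1) β (lam₀ - 2 * a * tanh β)
            - quenchedLogZ N k β (lam₀ - 2 * a * tanh β))
          + -(N * tanh β * quenchedMagSq N k β (lam₀ - 2 * a * tanh β)))) / N) a := by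
  simp only [pertPressure_eq_tsum]
  set R := |a| + 1
  set C := N * log 2 + (|lam₀| + 2 * R) * N / 2 + N with hC
  have hN₀ : (0 : ℝ) ≤ N := N.cast_nonneg
  have hlog₂ : 0 ≤ log 2 := log_nonneg one_le_two
  have hlam : ∀ x, |x| < R → |lam₀ - 2 * x * tanh β| ≤ |lam₀| + 2 * R := fun x hx => by
    refine (abs_sub _ _).trans (add_le_add le_rfl ?_)
    rw [abs_mul, abs_mul, abs_two]
    nlinarith [abs_tanh_lt_one β, abs_nonneg x, abs_nonneg (tanh β)]
  have hgrowth : ∀ k : ℕ, C + |β| * k ≤ (C + |β|) * 2 ^ k :=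
    add_mul_le_mul_two_pow (by positivity) (abs_nonneg β)
  refine HasDerivAt.div_const (hasDerivAt_tsum_poissonWeight_mul (N : ℝ)
    (g := fun k x => quenchedLogZ N k β (lam₀ - 2 * x * tanh β))
    (g' := fun k x => -(N * tanh β * quenchedMagSq N k β (lam₀ - 2 * x * tanh β))) (R := R)
    (M := C + |β|) (K := 2) (fun k x _ => ?_) (fun k x hx => ?_) (fun k x hx => ?_)
    (lt_add_one _)) _
  · have hline : HasDerivAt (fun x => lam₀ - 2 * x * tanh β) (-(2 * tanh β)) x := by
      simpa using (((hasDerivAt_id' x).const_mul 2).mul_const (tanh β)).const_sub lam₀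
    exact (hasDerivAt_quenchedLogZ k |>.comp x hline).congr_deriv (by ring)
  · refine (abs_quenchedLogZ_le hN k).trans (le_trans ?_ (hgrowth k))
    have := mul_le_mul_of_nonneg_right (hlam x hx) hN₀
    linarith
  · calc |-(N * tanh β * quenchedMagSq N k β (lam₀ - 2 * x * tanh β))|
        = N * |tanh β| * |quenchedMagSq N k β (lam₀ - 2 * x * tanh β)| := by
          rw [abs_neg, abs_mul, abs_mul, Nat.abs_cast]
      _ ≤ N * 1 * 1 := by
          gcongr; exacts [(abs_tanh_lt_one β).le, abs_quenchedMagSq_le_one hN k]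
      _ ≤ C + |β| * k := by
          have : 0 ≤ (|lam₀| + 2 * R) * N := by positivity
          nlinarith [abs_nonneg β, k.cast_nonneg (α := ℝ)]
      _ ≤ (C + |β|) * 2 ^ k := hgrowth k

lemma exists_hasDerivAt_pertPressure_line_le (hN : 0 < N) {a : ℝ} (ha : 0 ≤ a) :
    ∃ d, HasDerivAt (fun a => pertPressure N a β (lam₀ - 2 * a * tanh β)) d a ∧
      d ≤ log (cosh β) := by
  refine ⟨_, hasDerivAt_pertPressure_line hN a, ?_⟩
  have hN₀ : (0 : ℝ) < N := Nat.cast_pos.2 hN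
  rw [div_le_iff₀ hN₀, mul_comm (log _)]
  refine tsum_poissonWeight_mul_le (by positivity)
    (mul_nonneg hN₀.le (log_nonneg (one_le_cosh β))) fun k => ?_
  set lam := lam₀ - 2 * a * tanh β
  calc N * (quenchedLogZ N (k + 1) β lam - quenchedLogZ N k β lam)
        + -(N * tanh β * quenchedMagSq N k β lam)
      = N * (quenchedLogZ N (k + 1) β lam - quenchedLogZ N k β lam
          - tanh β * quenchedMagSq N k β lam) := by ring
    _ ≤ N * log (cosh β) := by
        gcongr
        linarith [quenchedLogZ_succ_le (β := β) (lam := lam) hN k]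

end Line

end DiluteFerromagnet

theorem pertPressure_along_line_general
    (N : ℕ) (hN : 1 ≤ N) (β : ℝ)
    (lam₀ : ℝ) :
    (∀ α d : ℝ, 0 ≤ α → 2 * α * Real.tanh β ≤ lam₀ →
      HasDerivAt (fun a : ℝ => pertPressure N a β (lam₀ - 2 * a * Real.tanh β)) d α →
      d ≤ Real.log (Real.cosh β))
    ∧ (∀ α : ℝ, 0 ≤ α → 2 * α * Real.tanh β ≤ lam₀ →
        pertPressure N α β (lam₀ - 2 * α * Real.tanh β)
          ≤ pertPressure N 0 β lam₀ + α * Real.log (Real.cosh β)) := by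
  set f := fun a : ℝ => pertPressure N a β (lam₀ - 2 * a * Real.tanh β)
  have hderiv : ∀ a, 0 ≤ a → ∃ d, HasDerivAt f d a ∧ d ≤ log (cosh β) :=
    fun _ ha => DiluteFerromagnet.exists_hasDerivAt_pertPressure_line_le hN ha
  refine ⟨fun α d hα _ hd => ?_, fun α hα _ => ?_⟩
  · obtain ⟨d', hd', hle⟩ := hderiv α hα
    exact hd.unique hd' ▸ hle
  · have hdiff : DifferentiableOn ℝ f (Set.Ici 0) := fun a ha =>
      (hderiv a ha).choose_spec.1.differentiableAt.differentiableWithinAt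
    have hderiv_le : ∀ a ∈ interior (Set.Ici 0), deriv f a ≤ log (cosh β) := fun a ha => by
      obtain ⟨d, hd, hle⟩ := hderiv a (interior_subset ha)
      exact hd.deriv ▸ hle
    have := (convex_Ici 0).image_sub_le_mul_sub_of_deriv_le hdiff.continuousOn
      (hdiff.mono interior_subset) hderiv_le 0 Set.self_mem_Ici α hα hα
    simp only [f, mul_zero, sub_zero, zero_mul] at this
    linarith

/-- Fix `0 < λ₀ < 1` and, for `α` with `2 α tanh β ≤ λ₀`, set
`λ(α) = λ₀ − 2 α tanh β ≥ 0`. Then the function `α ↦ Ā_N(λ(α))` satisfies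
`d/dα [Ā_N(λ(α))] ≤ ln cosh β`, and hence
`Ā_N(λ(α)) ≤ Ā_N(λ₀)|_{α=0} + α ln cosh β`. -/
theorem pertPressure_along_line
    (N : ℕ) (hN : 1 ≤ N) (β : ℝ) (hβ : 0 ≤ β)
    (lam₀ : ℝ) (h0 : 0 < lam₀) (h1 : lam₀ < 1) :
    (∀ α d : ℝ, 0 ≤ α → 2 * α * Real.tanh β ≤ lam₀ →
      HasDerivAt (fun a : ℝ => pertPressure N a β (lam₀ - 2 * a * Real.tanh β)) d α →
      d ≤ Real.log (Real.cosh β))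
    ∧ (∀ α : ℝ, 0 ≤ α → 2 * α * Real.tanh β ≤ lam₀ →
        pertPressure N α β (lam₀ - 2 * α * Real.tanh β)
          ≤ pertPressure N 0 β lam₀ + α * Real.log (Real.cosh β)) :=
  pertPressure_along_line_general N hN β lam₀
end
end

section
/- In the high temperature region 2α·tanh(β) < 1, the quenched pressure differs from the symmetric pressure by a term of order 1/N: there is a constant C = C(α,β) with 0 ≤ A_N(α,β) − Ã_S(α,β) ≤ C/N for all N. -/
/-!
Writing `exp (β σ σ') = cosh β (1 + θ σ σ')` with `θ = tanh β` gives `Z = cosh β ^ K · Q`, where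
`Q = ∑_σ ∏_ν (1 + θ σ_{i_ν} σ_{j_ν})`. Expanding the product over subsets `t` of the edges,
`Q = ∑_t θ ^ #t ∑_σ ∏_{ν ∈ t} σ_{i_ν} σ_{j_ν}`; each spin sum is `2 ^ N` or `0` according as every
site occurs an even number of times or not, so `Q ≥ 2 ^ N` (the term `t = ∅`). Hence
`ln Z ≥ N ln 2 + K ln cosh β`, whose quenched average is `N Ã_S`.

For the upper bound, `ln (Q / 2 ^ N) ≤ Q / 2 ^ N - 1`, and the average of `Q` is computed exactly:
averaging over the edge endpoints and then over the Poisson number of edges gives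
`∑_σ exp (α θ M(σ)² / N)` with `M` the total spin. Linearizing the square with a standard Gaussian
`g` (Hubbard–Stratonovich) and using `cosh t ≤ exp (t² / 2)` bounds this by
`2 ^ N 𝔼 exp (α θ g²) = 2 ^ N (1 - 2 α θ) ^ (-1/2)`, finite precisely when `2 α θ < 1`.
-/

open Filter Topology Finset

noncomputable section

/-- The quenched pressure `A_N(α,β) = (1/N) 𝔼 ln Z_N(β)`. -/
def pressure (N : ℕ) (α β : ℝ) : ℝ :=
  (quenchedExp N α (fun k e => Real.log (partZ N k β e))) / N

open Real MeasureTheory ProbabilityTheory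

lemma poissonWeight_nonneg {ζ : ℝ} (hζ : 0 ≤ ζ) (k : ℕ) : 0 ≤ poissonWeight ζ k := by
  unfold poissonWeight; positivity

lemma hasSum_poissonWeight_mul_pow (ζ y : ℝ) :
    HasSum (fun k ↦ poissonWeight ζ k * y ^ k) (exp (ζ * (y - 1))) := by
  have h := (NormedSpace.expSeries_div_hasSum_exp (ζ * y)).mul_left (exp (-ζ))
  rw [← Real.exp_eq_exp_ℝ, ← exp_add, show -ζ + ζ * y = ζ * (y - 1) by ring] at h
  refine h.congr_fun fun k ↦ ?_
  rw [poissonWeight, mul_pow]; ring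

lemma hasSum_poissonWeight (ζ : ℝ) : HasSum (poissonWeight ζ) 1 := by
  simpa using hasSum_poissonWeight_mul_pow ζ 1

lemma poissonWeight_succ_mul (ζ : ℝ) (k : ℕ) :
    poissonWeight ζ (k + 1) * (k + 1 : ℕ) = ζ * poissonWeight ζ k := by
  rw [poissonWeight, poissonWeight, Nat.factorial_succ]
  push_cast
  field_simp
  ring

lemma hasSum_poissonWeight_mul_self (ζ : ℝ) :
    HasSum (fun k ↦ poissonWeight ζ k * k) ζ := by
  rw [← hasSum_nat_add_iff' 1]
  simpa using ((hasSum_poissonWeight ζ).mul_left ζ).congr_fun fun k ↦ poissonWeight_succ_mul ζ k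

lemma integral_exp_mul_gaussianReal (s : ℝ) :
    ∫ x, exp (s * x) ∂gaussianReal 0 1 = exp (s ^ 2 / 2) := by
  simpa [mgf] using congrFun (mgf_id_gaussianReal (μ := 0) (v := 1)) s

lemma gaussianPDFReal_mul_exp_mul_sq (l x : ℝ) :
    gaussianPDFReal 0 1 x * exp (l * x ^ 2) = (√(2 * π))⁻¹ * exp (-(1 / 2 - l) * x ^ 2) := by
  rw [gaussianPDFReal, mul_assoc, ← exp_add]
  congr 2
  · simp
  · simp only [NNReal.coe_one]; ring

lemma integrable_exp_mul_sq_gaussianReal {l : ℝ} (hl : l < 1 / 2) :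
    Integrable (fun x ↦ exp (l * x ^ 2)) (gaussianReal 0 1) := by
  rw [gaussianReal_of_var_ne_zero _ one_ne_zero,
    integrable_withDensity_iff_integrable_smul' (measurable_gaussianPDF _ _)
      (ae_of_all _ fun _ ↦ gaussianPDF_lt_top)]
  simp only [toReal_gaussianPDF, smul_eq_mul, gaussianPDFReal_mul_exp_mul_sq]
  exact (integrable_exp_neg_mul_sq (by linarith)).const_mul _

lemma integral_exp_mul_sq_gaussianReal {l : ℝ} (hl : l < 1 / 2) :
    ∫ x, exp (l * x ^ 2) ∂gaussianReal 0 1 = (√(1 - 2 * l))⁻¹ := by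
  rw [integral_gaussianReal_eq_integral_smul one_ne_zero]
  simp only [smul_eq_mul, gaussianPDFReal_mul_exp_mul_sq]
  rw [integral_const_mul, integral_gaussian,
    show π / (1 / 2 - l) = 2 * π / (1 - 2 * l) by field_simp, sqrt_div' _ (by linarith)]
  have : 0 < √(2 * π) := by positivity
  field_simp

section Spins

variable {ι : Type*} [Fintype ι] [DecidableEq ι]

lemma sum_spin_pow (n : ℕ) : ∑ b : Bool, spin b ^ n = 1 + (-1) ^ n := by
  simp [spin]

lemma sum_exp_mul_sum_spin (t : ℝ) :
    ∑ σ : ι → Bool, exp (t * ∑ i, spin (σ i)) = (2 * cosh t) ^ Fintype.card ι := by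
  have h2 : ∑ b : Bool, exp (t * spin b) = 2 * cosh t := by
    simp [spin, cosh_eq]; ring
  simp_rw [mul_sum, exp_sum]
  rw [← Fintype.prod_sum (fun _ b ↦ exp (t * spin b)), h2, prod_const, card_univ]

lemma sum_prod_spin_nonneg (m : Multiset ι) :
    0 ≤ ∑ σ : ι → Bool, (m.map fun i ↦ spin (σ i)).prod := by
  classical
  have h (σ : ι → Bool) :
      (m.map fun i ↦ spin (σ i)).prod = ∏ i, spin (σ i) ^ m.count i := by
    rw [prod_multiset_map_count]
    refine prod_subset (subset_univ _) fun i _ hi ↦ ?_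
    rw [Multiset.count_eq_zero_of_notMem (by simpa using hi), pow_zero]
  simp_rw [h, ← Fintype.prod_sum fun i b ↦ spin b ^ m.count i, sum_spin_pow]
  refine prod_nonneg fun i _ ↦ ?_
  rcases (m.count i).even_or_odd with h | h <;> simp [h.neg_one_pow]

lemma sum_exp_mul_sq_sum_spin_le [Nonempty ι] {l : ℝ} (hl₀ : 0 ≤ l) (hl : l < 1 / 2) :
    ∑ σ : ι → Bool, exp (l * (∑ i, spin (σ i)) ^ 2 / Fintype.card ι)
      ≤ 2 ^ Fintype.card ι * (√(1 - 2 * l))⁻¹ := by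
  set n := Fintype.card ι
  have hn : (0 : ℝ) < n := by exact_mod_cast Fintype.card_pos
  set c := √(2 * l / n)
  have hc : c ^ 2 = 2 * l / n := sq_sqrt (by positivity)
  -- Hubbard–Stratonovich: a Gaussian integral linearizes the square.
  have hHS (σ : ι → Bool) : exp (l * (∑ i, spin (σ i)) ^ 2 / n)
      = ∫ x, exp ((c * ∑ i, spin (σ i)) * x) ∂gaussianReal 0 1 := by
    rw [integral_exp_mul_gaussianReal, mul_pow, hc]
    congr 1; field_simp
  have hcosh (x : ℝ) : (2 * cosh (x * c)) ^ n ≤ 2 ^ n * exp (l * x ^ 2) := by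
    calc (2 * cosh (x * c)) ^ n ≤ (2 * exp ((x * c) ^ 2 / 2)) ^ n := by
          gcongr
          exact cosh_le_exp_half_sq _
      _ = 2 ^ n * exp (l * x ^ 2) := by
          rw [mul_pow, ← exp_nat_mul, mul_pow, hc]; congr 2; field_simp
  simp_rw [hHS]
  rw [← integral_finsetSum _ fun σ _ ↦ integrable_exp_mul_gaussianReal _]
  calc ∫ x, ∑ σ : ι → Bool, exp ((c * ∑ i, spin (σ i)) * x) ∂gaussianReal 0 1
      ≤ ∫ x, 2 ^ n * exp (l * x ^ 2) ∂gaussianReal 0 1 := by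
        refine integral_mono ?_ ((integrable_exp_mul_sq_gaussianReal hl).const_mul _) fun x ↦ ?_
        · exact integrable_finsetSum _ fun σ _ ↦ integrable_exp_mul_gaussianReal _
        · simpa [mul_comm _ x, ← mul_assoc, sum_exp_mul_sum_spin] using hcosh x
    _ = 2 ^ n * (√(1 - 2 * l))⁻¹ := by
        rw [integral_const_mul, integral_exp_mul_sq_gaussianReal hl]

end Spins

lemma tanh_nonneg {x : ℝ} (hx : 0 ≤ x) : 0 ≤ tanh x := by
  rw [tanh_eq_sinh_div_cosh]; positivity

lemma exp_mul_spin_mul_spin (β : ℝ) (a b : Bool) :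
    exp (β * (spin a * spin b)) = cosh β * (1 + tanh β * (spin a * spin b)) := by
  have hc : cosh β ≠ 0 := (cosh_pos β).ne'
  have h : cosh β * (1 + tanh β * (spin a * spin b)) = cosh β + sinh β * (spin a * spin b) := by
    rw [tanh_eq_sinh_div_cosh]; field_simp
  rw [h]
  cases a <;> cases b <;> simp [spin, ← sub_eq_add_neg, cosh_add_sinh, cosh_sub_sinh]

def tanhPartZ (N k : ℕ) (θ : ℝ) (e : Fin k → Fin N × Fin N) : ℝ :=
  ∑ σ : Fin N → Bool, ∏ ν, (1 + θ * (spin (σ (e ν).1) * spin (σ (e ν).2)))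

lemma partZ_eq_cosh_pow_mul_tanhPartZ (N k : ℕ) (β : ℝ) (e : Fin k → Fin N × Fin N) :
    partZ N k β e = cosh β ^ k * tanhPartZ N k (tanh β) e := by
  simp_rw [partZ, tanhPartZ, ham, mul_sum, neg_mul_neg, mul_sum, exp_sum, exp_mul_spin_mul_spin,
    prod_mul_distrib, prod_const, card_univ, Fintype.card_fin]

lemma two_pow_le_tanhPartZ (N k : ℕ) {θ : ℝ} (hθ : 0 ≤ θ) (e : Fin k → Fin N × Fin N) :
    2 ^ N ≤ tanhPartZ N k θ e := by
  have hexpand (σ : Fin N → Bool) : ∏ ν, (1 + θ * (spin (σ (e ν).1) * spin (σ (e ν).2)))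
      = ∑ t ∈ univ.powerset, θ ^ #t * ((t.val.bind fun ν ↦ {(e ν).1, (e ν).2}).map
          fun i ↦ spin (σ i)).prod := by
    rw [prod_one_add]
    refine sum_congr rfl fun t _ ↦ ?_
    rw [prod_mul_distrib, prod_const, Multiset.map_bind, Multiset.prod_bind,
      prod_eq_multiset_prod]
    congr 2
    exact Multiset.map_congr rfl fun ν _ ↦ by simp
  rw [tanhPartZ]
  simp_rw [hexpand]
  rw [sum_comm]
  refine le_trans (le_of_eq ?_) (single_le_sum (fun t _ ↦ ?_) (empty_mem_powerset univ))
  · simp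
  · rw [← mul_sum]
    exact mul_nonneg (pow_nonneg hθ _) (sum_prod_spin_nonneg _)

lemma sum_tanhPartZ (N k : ℕ) (θ : ℝ) :
    ∑ e : Fin k → Fin N × Fin N, tanhPartZ N k θ e
      = ∑ σ : Fin N → Bool, ((N : ℝ) ^ 2 + θ * (∑ i, spin (σ i)) ^ 2) ^ k := by
  unfold tanhPartZ
  rw [sum_comm]
  refine sum_congr rfl fun σ _ ↦ ?_
  have hbase : (N : ℝ) ^ 2 + θ * (∑ i, spin (σ i)) ^ 2
      = ∑ p : Fin N × Fin N, (1 + θ * (spin (σ p.1) * spin (σ p.2))) := by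
    rw [sum_add_distrib, ← mul_sum, sq (∑ i, spin (σ i)), sum_mul_sum,
      ← Fintype.sum_prod_type']
    simp [sq]
  rw [hbase, Fintype.sum_pow]

lemma partZ_pos (N k : ℕ) (β : ℝ) (e : Fin k → Fin N × Fin N) : 0 < partZ N k β e :=
  sum_pos (fun _ _ ↦ exp_pos _) univ_nonempty

/-- With `θ = tanh β`, this is `ln Z - ln (2 ^ N cosh β ^ k)`: the part of `ln Z` not accounted
for by the symmetric pressure. -/
def logZExcess (N k : ℕ) (θ : ℝ) (e : Fin k → Fin N × Fin N) : ℝ :=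
  log (tanhPartZ N k θ e / 2 ^ N)

lemma log_partZ_eq (N k : ℕ) (β : ℝ) (e : Fin k → Fin N × Fin N) :
    log (partZ N k β e) = logZExcess N k (tanh β) e + (N * log 2 + k * log (cosh β)) := by
  have hZ := partZ_pos N k β e
  rw [partZ_eq_cosh_pow_mul_tanhPartZ] at hZ ⊢
  have hQ : tanhPartZ N k (tanh β) e ≠ 0 := (pos_of_mul_pos_right hZ (by positivity)).ne'
  rw [logZExcess, log_mul (by positivity) hQ, log_div hQ (by positivity), log_pow, log_pow]
  ring

section Excess

variable {N k : ℕ} {θ : ℝ}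

lemma logZExcess_nonneg (hθ : 0 ≤ θ) (e : Fin k → Fin N × Fin N) : 0 ≤ logZExcess N k θ e :=
  log_nonneg ((one_le_div (by positivity)).mpr (two_pow_le_tanhPartZ N k hθ e))

lemma logZExcess_le (hθ : 0 ≤ θ) (e : Fin k → Fin N × Fin N) :
    logZExcess N k θ e ≤ tanhPartZ N k θ e / 2 ^ N - 1 :=
  log_le_sub_one_of_pos (div_pos ((by positivity : (0 : ℝ) < 2 ^ N).trans_le
    (two_pow_le_tanhPartZ N k hθ e)) (by positivity))

end Excess

def quenchedTerm (N : ℕ) (α : ℝ) (F : (k : ℕ) → (Fin k → Fin N × Fin N) → ℝ) (k : ℕ) : ℝ :=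
  poissonWeight (α * N) k * ((∑ e, F k e) / (N : ℝ) ^ (2 * k))

section Quenched

variable {N : ℕ} {α : ℝ}

lemma quenchedExp_eq_tsum (F : (k : ℕ) → (Fin k → Fin N × Fin N) → ℝ) :
    quenchedExp N α F = ∑' k, quenchedTerm N α F k := rfl

lemma quenchedTerm_mono (hα : 0 ≤ α) {F G : (k : ℕ) → (Fin k → Fin N × Fin N) → ℝ}
    (h : ∀ k e, F k e ≤ G k e) (k : ℕ) : quenchedTerm N α F k ≤ quenchedTerm N α G k := by
  unfold quenchedTerm
  gcongr with e
  · exact poissonWeight_nonneg (by positivity) k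
  · exact h k e

lemma quenchedTerm_nonneg (hα : 0 ≤ α) {F : (k : ℕ) → (Fin k → Fin N × Fin N) → ℝ}
    (h : ∀ k e, 0 ≤ F k e) (k : ℕ) : 0 ≤ quenchedTerm N α F k := by
  simpa [quenchedTerm] using quenchedTerm_mono hα h k

lemma quenchedExp_nonneg (hα : 0 ≤ α) {F : (k : ℕ) → (Fin k → Fin N × Fin N) → ℝ}
    (h : ∀ k e, 0 ≤ F k e) : 0 ≤ quenchedExp N α F :=
  tsum_nonneg (quenchedTerm_nonneg hα h)

lemma quenchedTerm_const_mul (a : ℝ) (F : (k : ℕ) → (Fin k → Fin N × Fin N) → ℝ) (k : ℕ) :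
    quenchedTerm N α (fun k e ↦ a * F k e) k = a * quenchedTerm N α F k := by
  simp only [quenchedTerm, ← mul_sum]
  ring

lemma quenchedTerm_add_const (hN : N ≠ 0) (F : (k : ℕ) → (Fin k → Fin N × Fin N) → ℝ)
    (f : ℕ → ℝ) (k : ℕ) :
    quenchedTerm N α (fun k e ↦ F k e + f k) k
      = quenchedTerm N α F k + poissonWeight (α * N) k * f k := by
  have hcard : ((Fintype.card (Fin k → Fin N × Fin N) : ℕ) : ℝ) = (N : ℝ) ^ (2 * k) := by
    simp [pow_mul, sq]
  simp only [quenchedTerm, sum_add_distrib, sum_const, card_univ, nsmul_eq_mul, hcard]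
  field_simp

lemma hasSum_quenchedTerm_tanhPartZ (hN : N ≠ 0) (θ : ℝ) :
    HasSum (quenchedTerm N α fun k ↦ tanhPartZ N k θ)
      (∑ σ : Fin N → Bool, exp (α * θ * (∑ i, spin (σ i)) ^ 2 / N)) := by
  set x : (Fin N → Bool) → ℝ := fun σ ↦ 1 + θ * (∑ i, spin (σ i)) ^ 2 / (N : ℝ) ^ 2
  have hterm (k : ℕ) : quenchedTerm N α (fun k ↦ tanhPartZ N k θ) k
      = ∑ σ : Fin N → Bool, poissonWeight (α * N) k * x σ ^ k := by
    rw [quenchedTerm, sum_tanhPartZ, ← mul_sum, sum_div]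
    congr 2 with σ
    rw [pow_mul, ← div_pow]
    simp only [x]
    field_simp
  have hexp (σ : Fin N → Bool) :
      exp (α * θ * (∑ i, spin (σ i)) ^ 2 / N) = exp (α * N * (x σ - 1)) := by
    simp only [x]
    congr 1
    field_simp
    ring
  simp_rw [hexp]
  exact (hasSum_sum fun σ _ ↦ hasSum_poissonWeight_mul_pow _ _).congr_fun hterm

lemma hasSum_quenchedTerm_tanhPartZ_div_sub_one (hN : N ≠ 0) (θ : ℝ) :
    HasSum (quenchedTerm N α fun k e ↦ tanhPartZ N k θ e / 2 ^ N - 1)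
      ((∑ σ : Fin N → Bool, exp (α * θ * (∑ i, spin (σ i)) ^ 2 / N)) / 2 ^ N - 1) := by
  have h := ((hasSum_quenchedTerm_tanhPartZ (α := α) hN θ).mul_left (2 ^ N)⁻¹).add
    ((hasSum_poissonWeight (α * N)).mul_right (-1))
  rw [show ∀ S : ℝ, S / 2 ^ N - 1 = (2 ^ N)⁻¹ * S + 1 * -1 from fun S ↦ by ring]
  refine h.congr_fun fun k ↦ ?_
  simp_rw [div_eq_inv_mul, sub_eq_add_neg]
  rw [quenchedTerm_add_const hN (fun k e ↦ (2 ^ N)⁻¹ * tanhPartZ N k θ e) fun _ ↦ -1,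
    quenchedTerm_const_mul]

lemma summable_quenchedTerm_logZExcess (hN : N ≠ 0) (hα : 0 ≤ α) {θ : ℝ} (hθ : 0 ≤ θ) :
    Summable (quenchedTerm N α fun k ↦ logZExcess N k θ) :=
  (hasSum_quenchedTerm_tanhPartZ_div_sub_one hN θ).summable.of_nonneg_of_le
    (quenchedTerm_nonneg hα fun _ e ↦ logZExcess_nonneg hθ e)
    (quenchedTerm_mono hα fun _ e ↦ logZExcess_le hθ e)

lemma quenchedExp_logZExcess_le (hN : N ≠ 0) (hα : 0 ≤ α) {θ : ℝ} (hθ : 0 ≤ θ) :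
    quenchedExp N α (fun k ↦ logZExcess N k θ)
      ≤ (∑ σ : Fin N → Bool, exp (α * θ * (∑ i, spin (σ i)) ^ 2 / N)) / 2 ^ N - 1 :=
  hasSum_le (quenchedTerm_mono hα fun _ e ↦ logZExcess_le hθ e)
    (summable_quenchedTerm_logZExcess hN hα hθ).hasSum
    (hasSum_quenchedTerm_tanhPartZ_div_sub_one hN θ)

end Quenched

lemma pressure_sub_symmetric_eq {N : ℕ} (hN : N ≠ 0) {α β : ℝ} (hα : 0 ≤ α) (hβ : 0 ≤ β) :
    pressure N α β - (log 2 + α * log (cosh β))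
      = quenchedExp N α (fun k ↦ logZExcess N k (tanh β)) / N := by
  have htanh := tanh_nonneg hβ
  have hsym : HasSum (fun k ↦ poissonWeight (α * N) k * (N * log 2 + k * log (cosh β)))
      (N * log 2 + α * N * log (cosh β)) := by
    simpa [mul_add, ← mul_assoc] using ((hasSum_poissonWeight (α * N)).mul_right (N * log 2)).add
      ((hasSum_poissonWeight_mul_self (α * N)).mul_right (log (cosh β)))
  have hsplit : HasSum (quenchedTerm N α fun k e ↦ log (partZ N k β e))
      (quenchedExp N α (fun k ↦ logZExcess N k (tanh β)) + (N * log 2 + α * N * log (cosh β))) := by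
    refine ((summable_quenchedTerm_logZExcess hN hα htanh).hasSum.add hsym).congr_fun fun k ↦ ?_
    simp_rw [log_partZ_eq]
    exact quenchedTerm_add_const hN _ (fun k ↦ N * log 2 + k * log (cosh β)) k
  rw [pressure, quenchedExp_eq_tsum, hsplit.tsum_eq]
  field_simp
  ring

/-- In the high temperature region `2 α tanh β < 1`, the quenched
pressure differs from the symmetric pressure `Ã_S(α,β) = ln 2 + α ln cosh β` by a term
of order `1/N`: there is a constant `C = C(α,β)` with
`0 ≤ A_N(α,β) − Ã_S(α,β) ≤ C/N` for all `N`. -/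
theorem pressure_minus_symmetric_order_one_over_N
    (α β : ℝ) (hα : 0 < α) (hβ : 0 ≤ β) (hHT : 2 * α * Real.tanh β < 1) :
    ∃ C : ℝ, ∀ N : ℕ, 1 ≤ N →
      0 ≤ pressure N α β - (Real.log 2 + α * Real.log (Real.cosh β))
      ∧ pressure N α β - (Real.log 2 + α * Real.log (Real.cosh β)) ≤ C / N := by
  have htanh := tanh_nonneg hβ
  refine ⟨(√(1 - 2 * (α * tanh β)))⁻¹ - 1, fun N hN ↦ ?_⟩
  have hN0 : N ≠ 0 := Nat.one_le_iff_ne_zero.mp hN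
  have : Nonempty (Fin N) := ⟨⟨0, hN⟩⟩
  have hannealed : ∑ σ : Fin N → Bool, exp (α * tanh β * (∑ i, spin (σ i)) ^ 2 / N)
      ≤ 2 ^ N * (√(1 - 2 * (α * tanh β)))⁻¹ := by
    simpa using sum_exp_mul_sq_sum_spin_le (ι := Fin N) (mul_nonneg hα.le htanh) (by linarith)
  have hexcess : quenchedExp N α (fun k ↦ logZExcess N k (tanh β))
      ≤ (√(1 - 2 * (α * tanh β)))⁻¹ - 1 := by
    refine (quenchedExp_logZExcess_le hN0 hα.le htanh).trans ?_
    rwa [sub_le_sub_iff_right, div_le_iff₀' (by positivity)]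
  rw [pressure_sub_symmetric_eq hN0 hα.le hβ]
  exact ⟨div_nonneg (quenchedExp_nonneg hα.le fun _ e ↦ logZExcess_nonneg htanh e) N.cast_nonneg,
    div_le_div_of_nonneg_right hexcess N.cast_nonneg⟩
end
end
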